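/- arXiv:1106.2888 — 2 statements merged into one kernel-verified Lean document; each statement's English description precedes it below -/
import Mathlib

section
/- There exist P1, P2, N0 > 0 and 0 < δ2 < 1 such that the nested-lattice FDF sum rate with powers (P1, δ2·P2), namely (1/2) log(P1/(P1+δ2P2) + P1/N0) + [(1/2) log(δ2P2/(P1+δ2P2) + δ2P2/N0)]⁺, strictly exceeds the sum rate with full powers (P1, P2); i.e., transmitting below maximum power can strictly increase the achievable sum rate. -/
theorem nested_lattice_power_backoff_improves_sum_rate :
    ∃ P1 P2 N0 δ2 : ℝ, 0 < P1 ∧ 0 < P2 ∧ 0 < N0 ∧ 0 < δ2 ∧ δ2 < 1 ∧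
      (1/2) * Real.log (P1 / (P1 + δ2 * P2) + P1 / N0)
        + max ((1/2) * Real.log (δ2 * P2 / (P1 + δ2 * P2) + δ2 * P2 / N0)) 0
      > max ((1/2) * Real.log (P1 / (P1 + P2) + P1 / N0)) 0
        + max ((1/2) * Real.log (P2 / (P1 + P2) + P2 / N0)) 0 := by
  refine ⟨1, 1, 2, 1/2, by norm_num, by norm_num, by norm_num, by norm_num, by norm_num, ?_⟩
  have h1 : (1:ℝ) / (1 + 1) + 1 / 2 = 1 := by norm_num
  rw [show (1:ℝ) / (1 + 1/2 * 1) + 1/2 = 7/6 by norm_num, h1, Real.log_one, mul_zero,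
    max_self, add_zero]
  have hlog : 0 < Real.log (7/6 : ℝ) := Real.log_pos (by norm_num)
  have h2 : 0 ≤ max ((1/2) * Real.log (1/2 * 1 / (1 + 1/2 * 1) + 1/2 * 1 / 2)) 0 :=
    le_max_right _ _
  linarith
end

section
/- For all S > 0, the equation (1/2 + S)² = 1 + 2S has a unique positive solution S = 3/2; for S > 3/2 symmetric FDF with lattice codes strictly beats the CDF sum-rate bound, and for 0 < S < 3/2 the CDF bound is strictly larger. -/
theorem fdf_cdf_crossover :
    (∀ S : ℝ, 0 < S → ((1/2 + S)^2 = 1 + 2 * S ↔ S = 3/2)) ∧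
    (∀ S : ℝ, 3/2 < S →
      Real.log (1/2 + S) > (1/2) * Real.log (1 + 2 * S)) ∧
    (∀ S : ℝ, 0 < S → S < 3/2 →
      (1/2) * Real.log (1 + 2 * S) > Real.log (1/2 + S)) := by
  refine ⟨fun S hS => ?_, fun S hS => ?_, fun S hS hS' => ?_⟩
  · constructor
    · intro h
      have : (S - 3/2) * (S + 1/2) = 0 := by nlinarith
      rcases mul_eq_zero.1 this with h1 | h1 <;> nlinarith
    · rintro rfl; norm_num
  · have h1 : (0:ℝ) < 1 + 2 * S := by linarith
    have h2 : 1 + 2 * S < (1/2 + S)^2 := by nlinarith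
    have := Real.log_lt_log h1 h2
    rw [Real.log_pow] at this
    push_cast at this
    linarith
  · have h1 : (0:ℝ) < (1/2 + S)^2 := by positivity
    have h2 : (1/2 + S)^2 < 1 + 2 * S := by nlinarith
    have := Real.log_lt_log h1 h2
    rw [Real.log_pow] at this
    push_cast at this
    linarith
end
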